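/- arXiv:2503.19629 — 3 statements merged into one kernel-verified Lean document; each statement's English description precedes it below -/
import Mathlib

section
/- For every real number σ > 0, the sum over all integers z of exp(-z²/(2σ²)) satisfies max(√(2πσ²), 1) ≤ Σ_{z∈ℤ} exp(-z²/(2σ²)) ≤ √(2πσ²) + 1. -/
open Real MeasureTheory Set

lemma aux_summable_nat {b : ℝ} (hb : 0 < b) :
    Summable (fun n : ℕ => Real.exp (-b * (n : ℝ) ^ 2)) := by
  apply Summable.of_nonneg_of_le (fun n => (Real.exp_pos _).le)
    (fun n => ?_) (summable_geometric_of_lt_one (Real.exp_pos (-b)).le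
      (Real.exp_lt_one_iff.2 (neg_neg_iff_pos.2 hb)))
  rw [← Real.exp_nat_mul]
  apply Real.exp_le_exp.2
  have : (n : ℝ) ≤ (n : ℝ) ^ 2 := by
    exact_mod_cast Nat.le_self_pow two_ne_zero n
  nlinarith

lemma aux_summable_int {b : ℝ} (hb : 0 < b) :
    Summable (fun n : ℤ => Real.exp (-b * (n : ℝ) ^ 2)) := by
  apply Summable.of_nat_of_neg
  · exact aux_summable_nat hb
  · have := aux_summable_nat hb
    apply this.congr
    intro n
    push_cast
    rw [neg_sq]

lemma aux_one_le {b : ℝ} (hb : 0 < b) :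
    1 ≤ ∑' n : ℤ, Real.exp (-b * (n : ℝ) ^ 2) := by
  have := Summable.le_tsum (aux_summable_int hb) 0 (fun i _ => (Real.exp_pos _).le)
  simpa using this

/-- Normalization constant of the one-dimensional discrete Gaussian:
for every `σ > 0`, `max (√(2πσ²)) 1 ≤ ∑_{z ∈ ℤ} exp(-z²/(2σ²)) ≤ √(2πσ²) + 1`. -/
theorem stmt_0 (σ : ℝ) (hσ : 0 < σ) :
    max (Real.sqrt (2 * Real.pi * σ ^ 2)) 1
      ≤ ∑' z : ℤ, Real.exp (-(z : ℝ) ^ 2 / (2 * σ ^ 2)) ∧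
    ∑' z : ℤ, Real.exp (-(z : ℝ) ^ 2 / (2 * σ ^ 2))
      ≤ Real.sqrt (2 * Real.pi * σ ^ 2) + 1 := by
  have hσ2 : (0 : ℝ) < 2 * σ ^ 2 := by positivity
  set c : ℝ := 1 / (2 * σ ^ 2) with hc
  have hcpos : 0 < c := by positivity
  have hexp : ∀ z : ℤ, Real.exp (-(z : ℝ) ^ 2 / (2 * σ ^ 2)) = Real.exp (-c * (z : ℝ) ^ 2) := by
    intro z
    congr 1
    rw [hc]
    field_simp
  have htsum_eq : ∑' z : ℤ, Real.exp (-(z : ℝ) ^ 2 / (2 * σ ^ 2))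
      = ∑' z : ℤ, Real.exp (-c * (z : ℝ) ^ 2) := tsum_congr hexp
  -- Lower bound by √(2πσ²) via Poisson summation
  have hlow : Real.sqrt (2 * Real.pi * σ ^ 2) ≤ ∑' z : ℤ, Real.exp (-c * (z : ℝ) ^ 2) := by
    have ha : (0 : ℝ) < c / Real.pi := div_pos hcpos Real.pi_pos
    have hpoisson := Real.tsum_exp_neg_mul_int_sq ha
    have h1 : ∀ n : ℤ, -Real.pi * (c / Real.pi) * (n : ℝ) ^ 2 = -c * (n : ℝ) ^ 2 := by
      intro n
      field_simp
    simp_rw [h1] at hpoisson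
    rw [hpoisson]
    have h2 : (0 : ℝ) < Real.pi / (c / Real.pi) := div_pos Real.pi_pos ha
    have h3 : 1 ≤ ∑' n : ℤ, Real.exp (-(Real.pi / (c / Real.pi)) * (n : ℝ) ^ 2) := aux_one_le h2
    have h4 : (1 : ℝ) / (c / Real.pi) ^ ((1 : ℝ) / 2) = Real.sqrt (2 * Real.pi * σ ^ 2) := by
      rw [← Real.sqrt_eq_rpow]
      rw [show c / Real.pi = (2 * Real.pi * σ ^ 2)⁻¹ by rw [hc]; field_simp]
      rw [Real.sqrt_inv, one_div, inv_inv]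
    have h5 : (0 : ℝ) ≤ 1 / (c / Real.pi) ^ ((1 : ℝ) / 2) := by positivity
    calc Real.sqrt (2 * Real.pi * σ ^ 2) = 1 / (c / Real.pi) ^ ((1 : ℝ) / 2) * 1 := by
          rw [h4, mul_one]
      _ ≤ 1 / (c / Real.pi) ^ ((1 : ℝ) / 2) * ∑' n : ℤ, Real.exp (-(Real.pi / (c / Real.pi)) * (n : ℝ) ^ 2) := by
          exact mul_le_mul_of_nonneg_left h3 h5
      _ = 1 / (c / Real.pi) ^ ((1 : ℝ) / 2) * ∑' n : ℤ, Real.exp (-Real.pi / (c / Real.pi) * (n : ℝ) ^ 2) := by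
          congr 1
          apply tsum_congr
          intro n
          congr 2
          ring
  -- split the sum over ℤ
  have hnat : Summable (fun n : ℕ => Real.exp (-c * (n : ℝ) ^ 2)) := aux_summable_nat hcpos
  have hnat1 : Summable (fun n : ℕ => Real.exp (-c * ((n : ℝ) + 1) ^ 2)) := by
    apply ((summable_nat_add_iff 1).2 hnat).congr
    intro n
    push_cast
    ring_nf
  have hneg : Summable (fun n : ℕ => Real.exp (-c * ((-(n + 1) : ℤ) : ℝ) ^ 2)) := by
    apply hnat1.congr
    intro n
    push_cast
    rw [neg_sq]
  have hsplit : ∑' z : ℤ, Real.exp (-c * (z : ℝ) ^ 2)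
      = (∑' n : ℕ, Real.exp (-c * (n : ℝ) ^ 2))
        + ∑' n : ℕ, Real.exp (-c * ((-(n + 1) : ℤ) : ℝ) ^ 2) :=
    tsum_of_nat_of_neg_add_one hnat hneg
  -- tail bound by the Gaussian integral
  have htail : ∑' n : ℕ, Real.exp (-c * ((n : ℝ) + 1) ^ 2)
      ≤ Real.sqrt (Real.pi / c) / 2 := by
    apply Real.tsum_le_of_sum_range_le (fun n => (Real.exp_pos _).le)
    intro N
    have hanti : AntitoneOn (fun x : ℝ => Real.exp (-c * x ^ 2)) (Icc (0 : ℝ) (0 + N)) := by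
      intro x hx y hy hxy
      apply Real.exp_le_exp.2
      nlinarith [mul_nonneg hcpos.le (mul_nonneg (sub_nonneg.2 hxy) (add_nonneg hx.1 (hx.1.trans hxy)))]
    have h1 := hanti.sum_le_integral
    have h2 : ∫ x in (0 : ℝ)..(0 + (N : ℝ)), Real.exp (-c * x ^ 2)
        ≤ ∫ x in Ioi (0 : ℝ), Real.exp (-c * x ^ 2) := by
      rw [intervalIntegral.integral_of_le (by positivity)]
      apply setIntegral_mono_set ((integrable_exp_neg_mul_sq hcpos).integrableOn)
      · exact Filter.Eventually.of_forall fun x => (Real.exp_pos _).le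
      · exact Filter.Eventually.of_forall fun x hx => hx.1
    rw [integral_gaussian_Ioi] at h2
    calc ∑ i ∈ Finset.range N, Real.exp (-c * ((i : ℝ) + 1) ^ 2)
        = ∑ i ∈ Finset.range N, Real.exp (-c * ((0 : ℝ) + ((i : ℕ) + 1 : ℕ)) ^ 2) := by
          apply Finset.sum_congr rfl
          intro i _
          push_cast
          ring_nf
      _ ≤ ∫ x in (0 : ℝ)..(0 + (N : ℝ)), Real.exp (-c * x ^ 2) := h1
      _ ≤ Real.sqrt (Real.pi / c) / 2 := h2
  have hπc : Real.pi / c = 2 * Real.pi * σ ^ 2 := by rw [hc]; field_simp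
  -- upper bound
  have hup : ∑' z : ℤ, Real.exp (-c * (z : ℝ) ^ 2) ≤ Real.sqrt (2 * Real.pi * σ ^ 2) + 1 := by
    rw [hsplit]
    have e1 : ∑' n : ℕ, Real.exp (-c * (n : ℝ) ^ 2)
        = 1 + ∑' n : ℕ, Real.exp (-c * ((n : ℝ) + 1) ^ 2) := by
      rw [Summable.tsum_eq_zero_add hnat]
      push_cast
      simp
    have e2 : ∑' n : ℕ, Real.exp (-c * ((-(n + 1) : ℤ) : ℝ) ^ 2)
        = ∑' n : ℕ, Real.exp (-c * ((n : ℝ) + 1) ^ 2) := by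
      apply tsum_congr
      intro n
      push_cast
      rw [neg_sq]
    rw [e1, e2, ← hπc]
    linarith [htail]
  -- lower bound by 1
  have hone : (1 : ℝ) ≤ ∑' z : ℤ, Real.exp (-c * (z : ℝ) ^ 2) := aux_one_le hcpos
  rw [htsum_eq]
  exact ⟨max_le hlow hone, hup⟩
end

section
/- Let A be a nonzero r × n integer matrix with r < n and all entries bounded in absolute value by M ≥ 1. Then there exists a nonzero integer vector x ∈ ℤⁿ with all entries bounded in absolute value by (nM)^{r/(n−r)} such that A·x = 0. -/
attribute [local instance] Matrix.seminormedAddCommGroup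

/-- Siegel's lemma: a nonzero `r × n` integer matrix with `r < n` and entries bounded
by `M` has a nonzero integer kernel vector with entries bounded by `(nM)^{r/(n−r)}`. -/
theorem stmt_6 (r n : ℕ) (hrn : r < n) (M : ℤ) (hM : 1 ≤ M)
    (A : Matrix (Fin r) (Fin n) ℤ) (hA : A ≠ 0) (hbound : ∀ i j, |A i j| ≤ M) :
    ∃ x : Fin n → ℤ, x ≠ 0 ∧
      (∀ j, ((|x j| : ℤ) : ℝ) ≤ ((n : ℝ) * (M : ℝ)) ^ ((r : ℝ) / ((n : ℝ) - (r : ℝ)))) ∧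
      A.mulVec x = 0 := by
  have hr : 0 < r := by
    rcases Nat.eq_zero_or_pos r with h | h
    · exfalso; apply hA; subst h; ext i j; exact absurd i.2 (by simp)
    · exact h
  obtain ⟨t, ht0, htA, htle⟩ := Int.Matrix.exists_ne_zero_int_vec_norm_le' A
    (by simpa using hrn) (by simpa using hr) hA
  refine ⟨t, ht0, fun j => ?_, htA⟩
  have h1 : ‖t j‖ ≤ ‖t‖ := norm_le_pi_norm t j
  have h2 : ((|t j| : ℤ) : ℝ) = ‖t j‖ := by
    rw [Int.norm_eq_abs]; push_cast; ring
  rw [h2]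
  refine le_trans (le_trans h1 (by simpa using htle)) ?_
  have hAM : ‖A‖ ≤ (M : ℝ) := by
    rw [Matrix.norm_le_iff (by exact_mod_cast hM.trans' zero_le_one)]
    intro i j
    rw [Int.norm_eq_abs]
    exact_mod_cast hbound i j
  have he : 0 ≤ (r : ℝ) / ((n : ℝ) - (r : ℝ)) := by
    apply div_nonneg (by positivity)
    have : (r : ℝ) < n := by exact_mod_cast hrn
    linarith
  exact Real.rpow_le_rpow (by positivity) (by
    apply mul_le_mul_of_nonneg_left hAM (by positivity)) he
end

section
/- Let B ∈ ℝ^{(n−t)×n} be a matrix that, after restriction to some set of n−t columns, is a diagonal matrix with nonzero diagonal entries. If x ∈ ℤⁿ is chosen uniformly at random with each coordinate independently uniform on an arithmetic-progression-free set of M distinct integer values, then Pr[B·x = 0] ≤ (1/M)^{n−t}. -/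
/-- If `B ∈ ℝ^{(n−t)×n}` contains an invertible diagonal submatrix on some `n−t`
columns, and `x ∈ ℤⁿ` has independent coordinates each uniform on a (3-term
arithmetic-progression-free) set of `M` distinct integers, then
`Pr[B·x = 0] ≤ (1/M)^{n−t}`. -/
theorem stmt_8 (n t : ℕ) (ht : t ≤ n) (B : Matrix (Fin (n - t)) (Fin n) ℝ)
    (e : Fin (n - t) ↪ Fin n)
    (hdiag : ∀ i j : Fin (n - t), (i = j → B i (e j) ≠ 0) ∧ (i ≠ j → B i (e j) = 0))
    (M : ℕ) (hM : 0 < M) (S : Fin n → Finset ℤ) (hcard : ∀ j, (S j).card = M)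
    (hAP : ∀ j, ∀ a ∈ S j, ∀ b ∈ S j, ∀ c ∈ S j, a + c = 2 * b → a = c) :
    (Set.ncard {x : Fin n → ℤ | (∀ j, x j ∈ S j) ∧
        B.mulVec (fun j => (x j : ℝ)) = 0} : ℝ) / (M : ℝ) ^ n
      ≤ (1 / (M : ℝ)) ^ (n - t) := by
  classical
  set A := {x : Fin n → ℤ | (∀ j, x j ∈ S j) ∧
        B.mulVec (fun j => (x j : ℝ)) = 0} with hA
  set C := {j : Fin n // j ∉ Set.range e} with hC
  set K : Finset (C → ℤ) := Fintype.piFinset fun j => S j.1 with hK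
  set r : (Fin n → ℤ) → (C → ℤ) := fun x j => x j.1 with hr
  -- key equation
  have key : ∀ x ∈ A, ∀ i : Fin (n - t), (B i (e i)) * ((x (e i) : ℝ)) =
      - ∑ j ∈ Finset.univ.filter (fun j => j ∉ Set.range e), B i j * (x j : ℝ) := by
    intro x hx i
    have h0 : ∑ j, B i j * (x j : ℝ) = 0 := congrFun hx.2 i
    have hsplit := Finset.sum_filter_add_sum_filter_not Finset.univ
      (fun j => j ∈ Set.range e) (fun j => B i j * (x j : ℝ))
    have hfil : Finset.univ.filter (fun j => j ∈ Set.range e) = Finset.univ.map e := by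
      ext j; simp [Set.mem_range, eq_comm]
    have hin : ∑ j ∈ Finset.univ.filter (fun j => j ∈ Set.range e),
        B i j * (x j : ℝ) = B i (e i) * (x (e i) : ℝ) := by
      rw [hfil, Finset.sum_map]
      exact Finset.sum_eq_single i
        (fun i' _ hne => by rw [(hdiag i i').2 (Ne.symm hne), zero_mul])
        (fun h => absurd (Finset.mem_univ i) h)
    have := hsplit
    rw [hin, h0] at this
    linarith [this]
  have hinj : Set.InjOn r A := by
    intro x hx y hy hxy
    funext j
    by_cases hj : j ∈ Set.range e
    · obtain ⟨i, rfl⟩ := hj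
      have h1 := key x hx i
      have h2 := key y hy i
      have hsum : ∑ j ∈ Finset.univ.filter (fun j => j ∉ Set.range e),
          B i j * (x j : ℝ) = ∑ j ∈ Finset.univ.filter (fun j => j ∉ Set.range e),
          B i j * (y j : ℝ) := by
        apply Finset.sum_congr rfl
        intro j hjmem
        have hjn : j ∉ Set.range e := (Finset.mem_filter.mp hjmem).2
        have := congrFun hxy ⟨j, hjn⟩
        simp only [hr] at this
        rw [this]
      have heq : (B i (e i)) * ((x (e i) : ℝ)) = (B i (e i)) * ((y (e i) : ℝ)) := by
        rw [h1, h2, hsum]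
      have := mul_left_cancel₀ ((hdiag i i).1 rfl) heq
      exact_mod_cast this
    · exact congrFun hxy ⟨j, hj⟩
  have himg : r '' A ⊆ ↑K := by
    rintro _ ⟨x, hx, rfl⟩
    simp only [hK, Finset.mem_coe, Fintype.mem_piFinset]
    intro j
    exact hx.1 j.1
  have hcardC : Fintype.card C = t := by
    have h1 : Fintype.card {j : Fin n // j ∈ Set.range ⇑e} = n - t := by
      exact (Fintype.card_congr (Equiv.ofInjective (⇑e) e.injective)).symm.trans
        (Fintype.card_fin _)
    have h2 : Fintype.card C = Fintype.card (Fin n)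
        - Fintype.card {j : Fin n // j ∈ Set.range ⇑e} := by
      have := Fintype.card_subtype_compl (fun j : Fin n => j ∈ Set.range ⇑e)
      convert this using 2
    rw [h2, h1, Fintype.card_fin]
    omega
  have hKcard : (K.card : ℝ) = (M : ℝ) ^ t := by
    rw [hK, Fintype.card_piFinset]
    simp only [hcard]
    rw [Finset.prod_const, Finset.card_univ, hcardC]
    push_cast; ring
  have hAcard : (A.ncard : ℝ) ≤ (M : ℝ) ^ t := by
    have h1 : A.ncard = (r '' A).ncard := (Set.ncard_image_of_injOn hinj).symm
    have h2 : (r '' A).ncard ≤ (↑K : Set (C → ℤ)).ncard :=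
      Set.ncard_le_ncard himg (K.finite_toSet)
    rw [Set.ncard_coe_finset] at h2
    rw [h1]
    calc ((r '' A).ncard : ℝ) ≤ (K.card : ℝ) := by exact_mod_cast h2
      _ = (M : ℝ) ^ t := hKcard
  have hMpos : (0:ℝ) < (M:ℝ) := by exact_mod_cast hM
  have hfin : (1 / (M:ℝ)) ^ (n - t) = (M:ℝ) ^ t / (M:ℝ) ^ n := by
    rw [div_pow, one_pow, div_eq_div_iff (by positivity) (by positivity), one_mul,
      ← pow_add]
    congr 1
    omega
  rw [hfin]
  gcongr
end
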